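/- Let n > 1 and let Ω = 𝔹ⁿ × 𝔹ⁿ × ⋯ × 𝔹ⁿ ⊂ ℂ^{n²} be the n-fold product of the unit ball 𝔹ⁿ ⊂ ℂⁿ. Then for every z ∈ Ω, both S_Ω(z) ≠ (1/n)·T_Ω(z) and T_Ω(z) ≠ (1/n)·S_Ω(z). (In particular, the claim that for every bounded homogeneous domain one of these two equalities holds is false.) -/

import Mathlib

variable {F : Type*} [NormedAddCommGroup F] [InnerProductSpace ℂ F]

/-- Möbius automorphism of the unit ball of a complex inner ℂ product space. -/
noncomputable def mob (a w : F) : F :=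
  (1 - (inner ℂ a w : ℂ))⁻¹ •
    (a - ((inner ℂ a w : ℂ) / ((‖a‖ : ℂ) ^ 2)) • a
       - ((Real.sqrt (1 - ‖a‖ ^ 2) : ℂ)) • (w - ((inner ℂ a w : ℂ) / ((‖a‖ : ℂ) ^ 2)) • a))

lemma mob_zero (w : F) : mob 0 w = -w := by
  simp [mob]

lemma inner_self' (a : F) : (inner ℂ a a : ℂ) = ((‖a‖ : ℂ)) ^ 2 := by
  exact_mod_cast inner_self_eq_norm_sq_to_K a

lemma abs_inner_lt_one {a w : F} (ha : ‖a‖ < 1) (hw : ‖w‖ < 1) :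
    ‖(inner ℂ a w : ℂ)‖ < 1 := by
  calc ‖(inner ℂ a w : ℂ)‖ ≤ ‖a‖ * ‖w‖ := norm_inner_le_norm a w
  _ < 1 := by nlinarith [norm_nonneg a, norm_nonneg w]

lemma denom_ne_zero {a w : F} (ha : ‖a‖ < 1) (hw : ‖w‖ < 1) :
    (1 - (inner ℂ a w : ℂ)) ≠ 0 := by
  intro h
  have h1 : (inner ℂ a w : ℂ) = 1 := by linear_combination -h
  have h2 := abs_inner_lt_one ha hw
  rw [h1] at h2
  simp at h2

lemma mob_self {a : F} (ha : ‖a‖ < 1) : mob a a = 0 := by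
  rcases eq_or_ne a 0 with rfl | h0
  · simp [mob]
  · have hc : ((‖a‖ : ℂ) ^ 2) ≠ 0 := by
      simpa using (norm_ne_zero_iff.mpr h0)
    rw [mob, inner_self', div_self hc, one_smul]
    simp

lemma norm_mob_lt_one {a w : F} (ha : ‖a‖ < 1) (hw : ‖w‖ < 1) : ‖mob a w‖ < 1 := by
  rcases eq_or_ne a 0 with rfl | h0
  · rw [mob_zero, norm_neg]; exact hw
  · set α : ℂ := inner ℂ a w with hα
    set c : ℝ := ‖a‖ with hcdef
    have hc0 : 0 < c := norm_pos_iff.mpr h0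
    set s : ℝ := Real.sqrt (1 - c^2) with hsdef
    have hs2 : s^2 = 1 - c^2 := Real.sq_sqrt (by nlinarith)
    set P : F := (α / ((c:ℂ))^2) • a with hP
    set Q : F := w - P with hQ
    set D : ℂ := 1 - α with hD
    have hDne : D ≠ 0 := denom_ne_zero ha hw
    have hmob : mob a w = D⁻¹ • ((a - P) - (s:ℂ) • Q) := by
      rw [mob]
    have haP : (inner ℂ a P : ℂ) = α := by
      rw [hP, inner_smul_right, inner_self', ← hcdef]
      have hcC : ((c:ℂ)) ≠ 0 := by exact_mod_cast hc0.ne'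
      field_simp
    have haQ : (inner ℂ a Q : ℂ) = 0 := by
      rw [hQ, inner_sub_right, haP, hα, sub_self]
    have hPQ : (inner ℂ P Q : ℂ) = 0 := by
      rw [hP, inner_smul_left, haQ, mul_zero]
    have hcross : (inner ℂ (a - P) ((s:ℂ) • Q) : ℂ) = 0 := by
      rw [inner_sub_left, inner_smul_right, inner_smul_right, haQ, hPQ]
      ring
    have hnormP : ‖P‖^2 = ‖α‖^2 / c^2 := by
      have h1 : ‖(α / ((c:ℂ))^2)‖ = ‖α‖ / c^2 := by
        rw [norm_div, norm_pow, Complex.norm_real, Real.norm_eq_abs, abs_of_nonneg hc0.le]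
      rw [hP, norm_smul, h1, ← hcdef]
      field_simp
    have hnum : ‖(a - P) - (s:ℂ) • Q‖^2 = ‖a - P‖^2 + ‖(s:ℂ) • Q‖^2 := by
      rw [norm_sub_sq (𝕜 := ℂ), hcross]
      simp
    have haP2 : ‖a - P‖^2 = c^2 - 2 * α.re + ‖α‖^2 / c^2 := by
      rw [norm_sub_sq (𝕜 := ℂ), haP, hnormP, ← hcdef]
      simp [RCLike.re_to_complex]
    have hconj : α * (starRingEnd ℂ) α = ((‖α‖^2 : ℝ) : ℂ) := by
      rw [Complex.mul_conj]
      norm_cast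
      rw [Complex.sq_norm]
    have hwP : (inner ℂ w P : ℂ) = ((‖α‖^2 / c^2 : ℝ) : ℂ) := by
      rw [hP, inner_smul_right, ← inner_conj_symm, ← hα, div_mul_eq_mul_div, hconj]
      push_cast
      ring
    have hQ2 : ‖Q‖^2 = ‖w‖^2 - ‖α‖^2 / c^2 := by
      rw [hQ, norm_sub_sq (𝕜 := ℂ), hwP, hnormP]
      simp only [RCLike.re_to_complex, Complex.ofReal_re]
      ring
    have hsQ : ‖(s:ℂ) • Q‖^2 = (1 - c^2) * (‖w‖^2 - ‖α‖^2 / c^2) := by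
      rw [norm_smul, mul_pow, ← hQ2]
      congr 1
      rw [← hs2]
      rw [Complex.norm_real, Real.norm_eq_abs, sq_abs]
    have hD2 : ‖D‖^2 = 1 - 2 * α.re + ‖α‖^2 := by
      rw [hD, Complex.sq_norm, Complex.sq_norm,
        Complex.normSq_apply, Complex.normSq_apply]
      simp [Complex.sub_re, Complex.sub_im, Complex.one_re, Complex.one_im]
      ring
    have hkey : ‖(a - P) - (s:ℂ) • Q‖^2 = ‖D‖^2 - (1 - c^2) * (1 - ‖w‖^2) := by
      rw [hnum, haP2, hsQ, hD2]
      field_simp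
      ring
    have hlt : ‖(a - P) - (s:ℂ) • Q‖^2 < ‖D‖^2 := by
      rw [hkey]
      have h1 : c^2 < 1 := by nlinarith
      have h2 : ‖w‖^2 < 1 := by nlinarith [norm_nonneg w]
      have h3 : 0 < (1 - c^2) * (1 - ‖w‖^2) := mul_pos (by linarith) (by linarith)
      linarith
    have hlt' : ‖(a - P) - (s:ℂ) • Q‖ < ‖D‖ :=
      lt_of_pow_lt_pow_left₀ 2 (norm_nonneg D) hlt
    have hDpos : (0:ℝ) < ‖D‖ := norm_pos_iff.mpr hDne
    rw [hmob, norm_smul, norm_inv]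
    rw [inv_mul_lt_iff₀ hDpos]
    simpa using hlt'

lemma mob_mob {a w : F} (ha : ‖a‖ < 1) (hw : ‖w‖ < 1) : mob a (mob a w) = w := by
  rcases eq_or_ne a 0 with rfl | h0
  · simp [mob_zero]
  · set α : ℂ := inner ℂ a w with hα
    set c : ℝ := ‖a‖ with hcdef
    have hc0 : 0 < c := norm_pos_iff.mpr h0
    set s : ℝ := Real.sqrt (1 - c^2) with hsdef
    have hs2 : s^2 = 1 - c^2 := Real.sq_sqrt (by nlinarith)
    have hs0 : 0 < s := Real.sqrt_pos.mpr (by nlinarith)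
    have hsC : ((s:ℂ)) ≠ 0 := by exact_mod_cast hs0.ne'
    have hcC : ((c:ℂ)) ≠ 0 := by exact_mod_cast hc0.ne'
    have hs2C : ((s:ℂ))^2 = 1 - ((c:ℂ))^2 := by exact_mod_cast hs2
    set D : ℂ := 1 - α with hD
    have hDne : D ≠ 0 := denom_ne_zero ha hw
    have hu : mob a w = (D⁻¹ * (1 - α/((c:ℂ))^2 + (s:ℂ)*(α/((c:ℂ))^2))) • a
        + (-(D⁻¹ * (s:ℂ))) • w := by
      rw [mob, ← hcdef, ← hsdef, ← hα, ← hD]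
      match_scalars <;> (field_simp; try ring)
    have hβ : (inner ℂ a (mob a w) : ℂ) = D⁻¹ * (((c:ℂ))^2 - α) := by
      rw [hu, inner_add_right, inner_smul_right, inner_smul_right, inner_self',
        ← hcdef, ← hα]
      field_simp
      ring
    have h1β : 1 - D⁻¹ * (((c:ℂ))^2 - α) = ((s:ℂ))^2 * D⁻¹ := by
      rw [hs2C]; field_simp; rw [hD]; ring
    have hc2σ : ((c:ℂ))^2 = 1 - ((s:ℂ))^2 := by rw [hs2C]; ring
    have h1s : (1 - ((s:ℂ))^2) ≠ 0 := by
      rw [← hc2σ]; exact pow_ne_zero 2 hcC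
    conv_lhs => rw [mob]
    rw [hβ, ← hcdef, ← hsdef, h1β, hu, hc2σ]
    match_scalars <;> (field_simp; try ring)

lemma differentiableAt_mob {a w : F} (ha : ‖a‖ < 1) (hw : ‖w‖ < 1) :
    DifferentiableAt ℂ (mob a) w := by
  have hinner : DifferentiableAt ℂ (fun v : F => (inner ℂ a v : ℂ)) w :=
    (innerSL ℂ a).differentiableAt
  have h1 : DifferentiableAt ℂ (fun v : F => (1 - (inner ℂ a v : ℂ))⁻¹) w :=
    ((differentiableAt_const _).sub hinner).inv (denom_ne_zero ha hw)
  have h2 : DifferentiableAt ℂ (fun v : F =>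
      a - ((inner ℂ a v : ℂ) / ((‖a‖ : ℂ) ^ 2)) • a
        - ((Real.sqrt (1 - ‖a‖ ^ 2) : ℂ)) • (v - ((inner ℂ a v : ℂ) / ((‖a‖ : ℂ) ^ 2)) • a)) w := by
    fun_prop
  have := h1.smul h2
  unfold mob
  exact this

/-! ### Product layer -/

/-- The `i`-th row of a matrix-indexed vector. -/
def row (n : ℕ) (i : Fin n) (w : EuclideanSpace ℂ (Fin n × Fin n)) :
    EuclideanSpace ℂ (Fin n) := WithLp.toLp 2 (fun j => w (i, j))

noncomputable def rowCLM (n : ℕ) (i : Fin n) :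
    EuclideanSpace ℂ (Fin n × Fin n) →L[ℂ] EuclideanSpace ℂ (Fin n) :=
  LinearMap.toContinuousLinearMap
    { toFun := fun w => row n i w
      map_add' := fun _ _ => rfl
      map_smul' := fun _ _ => rfl }

/-- The product Möbius map, acting row by row. -/
noncomputable def Phi (n : ℕ) (z w : EuclideanSpace ℂ (Fin n × Fin n)) :
    EuclideanSpace ℂ (Fin n × Fin n) :=
  WithLp.toLp 2 (fun p => mob (row n p.1 z) (row n p.1 w) p.2)

lemma row_Phi (n : ℕ) (z w : EuclideanSpace ℂ (Fin n × Fin n)) (i : Fin n) :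
    row n i (Phi n z w) = mob (row n i z) (row n i w) := rfl

lemma row_norm_sq (n : ℕ) (w : EuclideanSpace ℂ (Fin n × Fin n)) (i : Fin n) :
    ‖row n i w‖ ^ 2 = ∑ j, ‖w (i, j)‖ ^ 2 := by
  rw [EuclideanSpace.norm_eq, Real.sq_sqrt (by positivity)]
  rfl

lemma row_norm_lt_one_iff (n : ℕ) (w : EuclideanSpace ℂ (Fin n × Fin n)) (i : Fin n) :
    ‖row n i w‖ < 1 ↔ ∑ j, ‖w (i, j)‖ ^ 2 < 1 := by
  rw [← row_norm_sq]
  constructor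
  · intro h; nlinarith [norm_nonneg (row n i w)]
  · intro h; nlinarith [norm_nonneg (row n i w)]

lemma norm_sq_eq_sum_rows (n : ℕ) (w : EuclideanSpace ℂ (Fin n × Fin n)) :
    ‖w‖ ^ 2 = ∑ i, ‖row n i w‖ ^ 2 := by
  rw [EuclideanSpace.norm_eq, Real.sq_sqrt (by positivity)]
  rw [Fintype.sum_prod_type]
  refine Finset.sum_congr rfl fun i _ => ?_
  rw [row_norm_sq]

lemma abs_coord_le_row (n : ℕ) (w : EuclideanSpace ℂ (Fin n × Fin n)) (p : Fin n × Fin n) :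
    ‖w p‖ ≤ ‖row n p.1 w‖ := by
  have h1 : ‖w p‖ ^ 2 ≤ ‖row n p.1 w‖ ^ 2 := by
    rw [row_norm_sq]
    refine Finset.single_le_sum (f := fun j => ‖w (p.1, j)‖ ^ 2)
      (fun j _ => by positivity) (Finset.mem_univ p.2)
  nlinarith [norm_nonneg (w p), norm_nonneg (row n p.1 w)]

/-- The product of unit balls, row by row. -/
def B (n : ℕ) : Set (EuclideanSpace ℂ (Fin n × Fin n)) :=
  {w | ∀ i, ‖row n i w‖ < 1}

lemma Phi_mem {n : ℕ} {z : EuclideanSpace ℂ (Fin n × Fin n)}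
    (hz : ∀ i, ‖row n i z‖ < 1) {w} (hw : ∀ i, ‖row n i w‖ < 1) :
    ∀ i, ‖row n i (Phi n z w)‖ < 1 := fun i => by
  rw [row_Phi]; exact norm_mob_lt_one (hz i) (hw i)

lemma Phi_Phi {n : ℕ} {z : EuclideanSpace ℂ (Fin n × Fin n)}
    (hz : ∀ i, ‖row n i z‖ < 1) {w} (hw : ∀ i, ‖row n i w‖ < 1) :
    Phi n z (Phi n z w) = w := by
  ext p
  have h := mob_mob (hz p.1) (hw p.1)
  calc Phi n z (Phi n z w) p
      = mob (row n p.1 z) (mob (row n p.1 z) (row n p.1 w)) p.2 := rfl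
  _ = row n p.1 w p.2 := by rw [h]
  _ = w p := rfl

lemma Phi_z {n : ℕ} {z : EuclideanSpace ℂ (Fin n × Fin n)}
    (hz : ∀ i, ‖row n i z‖ < 1) : Phi n z z = 0 := by
  ext p
  calc Phi n z z p = mob (row n p.1 z) (row n p.1 z) p.2 := rfl
  _ = (0 : EuclideanSpace ℂ (Fin n)) p.2 := by rw [mob_self (hz p.1)]
  _ = 0 := rfl

lemma Phi_diff {n : ℕ} {z : EuclideanSpace ℂ (Fin n × Fin n)}
    (hz : ∀ i, ‖row n i z‖ < 1) : DifferentiableOn ℂ (Phi n z) (B n) := by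
  intro w hw
  apply DifferentiableAt.differentiableWithinAt
  rw [show (Phi n z) = fun w => WithLp.toLp 2 (fun p => mob (row n p.1 z) (rowCLM n p.1 w) p.2) from rfl]
  rw [differentiableAt_euclidean]
  intro p
  have h1 : DifferentiableAt ℂ (mob (row n p.1 z)) (rowCLM n p.1 w) :=
    differentiableAt_mob (hz p.1) (hw p.1)
  have h2 : DifferentiableAt ℂ (fun v => mob (row n p.1 z) (rowCLM n p.1 v)) w :=
    h1.comp w (rowCLM n p.1).differentiableAt
  have h3 := ((EuclideanSpace.proj p.2 : EuclideanSpace ℂ (Fin n) →L[ℂ] ℂ).differentiableAt).comp w h2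
  exact h3

/-- The classical squeezing function (embeddings into the Euclidean unit ball) for a
domain `Ω ⊆ ℂ^(n²)` (coordinates indexed by `Fin n × Fin n`, Euclidean norm). -/
noncomputable def ballSqueezingFunction (n : ℕ)
    (Ω : Set (EuclideanSpace ℂ (Fin n × Fin n)))
    (z : EuclideanSpace ℂ (Fin n × Fin n)) : ℝ :=
  sSup {r : ℝ | 0 < r ∧
    ∃ f : EuclideanSpace ℂ (Fin n × Fin n) → EuclideanSpace ℂ (Fin n × Fin n),
    DifferentiableOn ℂ f Ω ∧ Set.InjOn f Ω ∧
    (∀ w ∈ Ω, ‖f w‖ < 1) ∧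
    f z = 0 ∧
    Metric.ball (0 : EuclideanSpace ℂ (Fin n × Fin n)) r ⊆ f '' Ω}

/-- The squeezing function corresponding to the polydisk for a domain `Ω ⊆ ℂ^(n²)`. -/
noncomputable def polydiskSqueezingFunction (n : ℕ)
    (Ω : Set (EuclideanSpace ℂ (Fin n × Fin n)))
    (z : EuclideanSpace ℂ (Fin n × Fin n)) : ℝ :=
  sSup {r : ℝ | 0 < r ∧
    ∃ f : EuclideanSpace ℂ (Fin n × Fin n) → EuclideanSpace ℂ (Fin n × Fin n),
    DifferentiableOn ℂ f Ω ∧ Set.InjOn f Ω ∧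
    (∀ w ∈ Ω, ∀ i, ‖f w i‖ < 1) ∧
    f z = 0 ∧
    {w : EuclideanSpace ℂ (Fin n × Fin n) | ∀ i, ‖w i‖ < r} ⊆ f '' Ω}

lemma ballBounds (n : ℕ) (hn : 1 < n) (z : EuclideanSpace ℂ (Fin n × Fin n))
    (hz : ∀ i, ‖row n i z‖ < 1) :
    (Real.sqrt n)⁻¹ ≤ ballSqueezingFunction n (B n) z ∧
      ballSqueezingFunction n (B n) z ≤ 1 := by
  have hn0 : (0:ℝ) < n := by positivity
  have hsn : (0:ℝ) < Real.sqrt n := Real.sqrt_pos.mpr hn0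
  have hsn2 : (Real.sqrt n)^2 = (n:ℝ) := Real.sq_sqrt hn0.le
  have hcne : (((Real.sqrt n : ℝ)) : ℂ) ≠ 0 := by exact_mod_cast hsn.ne'
  set c : ℂ := (((Real.sqrt n : ℝ)) : ℂ)⁻¹ with hc
  have hcne' : c ≠ 0 := inv_ne_zero hcne
  set Sset : Set ℝ := {r : ℝ | 0 < r ∧
    ∃ f : EuclideanSpace ℂ (Fin n × Fin n) → EuclideanSpace ℂ (Fin n × Fin n),
    DifferentiableOn ℂ f (B n) ∧ Set.InjOn f (B n) ∧
    (∀ w ∈ B n, ‖f w‖ < 1) ∧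
    f z = 0 ∧
    Metric.ball (0 : EuclideanSpace ℂ (Fin n × Fin n)) r ⊆ f '' (B n)} with hSset
  have hub : ∀ r ∈ Sset, r ≤ 1 := by
    rintro r ⟨hr, f, -, -, hflt, -, hball⟩
    by_contra hcon
    push_neg at hcon
    set v : EuclideanSpace ℂ (Fin n × Fin n) :=
      EuclideanSpace.single ((⟨0, by omega⟩ : Fin n), (⟨0, by omega⟩ : Fin n))
        ((((1+r)/2 : ℝ)) : ℂ) with hv
    have hvnorm : ‖v‖ = (1+r)/2 := by
      rw [hv, EuclideanSpace.norm_single, Complex.norm_real, Real.norm_eq_abs,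
        abs_of_pos (by linarith)]
    obtain ⟨w, hwB, hfw⟩ := hball (by
      rw [mem_ball_zero_iff, hvnorm]; linarith)
    have h1 := hflt w hwB
    rw [hfw, hvnorm] at h1
    linarith
  have hmem : (Real.sqrt n)⁻¹ ∈ Sset := by
    refine ⟨by positivity, fun w => c • Phi n z w, ?_, ?_, ?_, ?_, ?_⟩
    · exact (Phi_diff hz).const_smul c
    · intro u hu v hv h
      have h2 : Phi n z u = Phi n z v := smul_right_injective _ hcne' h
      calc u = Phi n z (Phi n z u) := (Phi_Phi hz hu).symm
      _ = Phi n z (Phi n z v) := by rw [h2]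
      _ = v := Phi_Phi hz hv
    · intro w hw
      have hΦ2 : ‖Phi n z w‖^2 < n := by
        rw [norm_sq_eq_sum_rows]
        have hlt : ∀ i ∈ Finset.univ, ‖row n i (Phi n z w)‖^2 < 1 := fun i _ =>
          pow_lt_one₀ (norm_nonneg _) (Phi_mem hz hw i) two_ne_zero
        calc ∑ i, ‖row n i (Phi n z w)‖^2 < ∑ _i : Fin n, (1:ℝ) :=
            Finset.sum_lt_sum_of_nonempty (Finset.univ_nonempty_iff.mpr ⟨⟨0, by omega⟩⟩) hlt
        _ = n := by simp
      have hΦ : ‖Phi n z w‖ < Real.sqrt n := by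
        nlinarith [norm_nonneg (Phi n z w)]
      rw [norm_smul, hc, norm_inv, Complex.norm_real, Real.norm_eq_abs,
        abs_of_pos hsn, inv_mul_lt_iff₀ hsn, mul_one]
      exact hΦ
    · show c • Phi n z z = 0
      rw [Phi_z hz, smul_zero]
    · intro v hv
      rw [mem_ball_zero_iff] at hv
      set u : EuclideanSpace ℂ (Fin n × Fin n) := (((Real.sqrt n : ℝ)) : ℂ) • v with hu
      have hun : ‖u‖ < 1 := by
        rw [hu, norm_smul, Complex.norm_real, Real.norm_eq_abs, abs_of_pos hsn]
        calc Real.sqrt n * ‖v‖ < Real.sqrt n * (Real.sqrt n)⁻¹ :=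
          mul_lt_mul_of_pos_left hv hsn
        _ = 1 := mul_inv_cancel₀ hsn.ne'
      have hurows : ∀ i, ‖row n i u‖ < 1 := by
        intro i
        have h1 : ‖row n i u‖^2 ≤ ‖u‖^2 := by
          rw [norm_sq_eq_sum_rows]
          exact Finset.single_le_sum (f := fun i => ‖row n i u‖^2)
            (fun i _ => by positivity) (Finset.mem_univ i)
        nlinarith [norm_nonneg (row n i u), norm_nonneg u]
      refine ⟨Phi n z u, Phi_mem hz hurows, ?_⟩
      show c • Phi n z (Phi n z u) = v
      rw [Phi_Phi hz hurows, hu, hc, smul_smul, inv_mul_cancel₀ hcne, one_smul]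
  constructor
  · exact le_csSup ⟨1, hub⟩ hmem
  · exact csSup_le ⟨_, hmem⟩ hub

lemma polyBounds (n : ℕ) (hn : 1 < n) (z : EuclideanSpace ℂ (Fin n × Fin n))
    (hz : ∀ i, ‖row n i z‖ < 1) :
    (Real.sqrt n)⁻¹ ≤ polydiskSqueezingFunction n (B n) z ∧
      polydiskSqueezingFunction n (B n) z ≤ 1 := by
  have hn0 : (0:ℝ) < n := by positivity
  have hsn : (0:ℝ) < Real.sqrt n := Real.sqrt_pos.mpr hn0
  have hsn2 : (Real.sqrt n)^2 = (n:ℝ) := Real.sq_sqrt hn0.le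
  set Tset : Set ℝ := {r : ℝ | 0 < r ∧
    ∃ f : EuclideanSpace ℂ (Fin n × Fin n) → EuclideanSpace ℂ (Fin n × Fin n),
    DifferentiableOn ℂ f (B n) ∧ Set.InjOn f (B n) ∧
    (∀ w ∈ B n, ∀ i, ‖f w i‖ < 1) ∧
    f z = 0 ∧
    {w : EuclideanSpace ℂ (Fin n × Fin n) | ∀ i, ‖w i‖ < r} ⊆ f '' (B n)}
    with hTset
  have hub : ∀ r ∈ Tset, r ≤ 1 := by
    rintro r ⟨hr, f, -, -, hflt, -, hpoly⟩
    by_contra hcon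
    push_neg at hcon
    set v : EuclideanSpace ℂ (Fin n × Fin n) :=
      WithLp.toLp 2 (fun _ => ((((1+r)/2 : ℝ)) : ℂ)) with hv
    have hvabs : ∀ p : Fin n × Fin n, ‖v p‖ = (1+r)/2 := fun p => by
      show ‖((((1+r)/2 : ℝ)) : ℂ)‖ = (1+r)/2
      rw [Complex.norm_real, Real.norm_eq_abs, abs_of_pos (by linarith)]
    obtain ⟨w, hwB, hfw⟩ := hpoly (show v ∈ {w : EuclideanSpace ℂ (Fin n × Fin n) |
      ∀ p, ‖w p‖ < r} from fun p => by rw [hvabs p]; linarith)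
    have hn0' : 0 < n := by omega
    have h1 := hflt w hwB ((⟨0, hn0'⟩ : Fin n), (⟨0, hn0'⟩ : Fin n))
    rw [hfw, hvabs ((⟨0, hn0'⟩ : Fin n), (⟨0, hn0'⟩ : Fin n))] at h1
    linarith
  have hmem : (Real.sqrt n)⁻¹ ∈ Tset := by
    refine ⟨by positivity, Phi n z, Phi_diff hz, ?_, ?_, Phi_z hz, ?_⟩
    · intro u hu v hv h
      calc u = Phi n z (Phi n z u) := (Phi_Phi hz hu).symm
      _ = Phi n z (Phi n z v) := by rw [h]
      _ = v := Phi_Phi hz hv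
    · intro w hw p
      exact lt_of_le_of_lt (abs_coord_le_row n _ p) (Phi_mem hz hw p.1)
    · intro v hv
      have hvrows : ∀ i, ‖row n i v‖ < 1 := by
        intro i
        have h1 : ‖row n i v‖^2 < 1 := by
          rw [row_norm_sq]
          have hlt : ∀ j ∈ Finset.univ, ‖v (i, j)‖^2 < (n:ℝ)⁻¹ := by
            intro j _
            have h2 := hv (i, j)
            have h3 : ‖v (i, j)‖^2 < ((Real.sqrt n)⁻¹)^2 :=
              pow_lt_pow_left₀ h2 (norm_nonneg _) two_ne_zero
            rwa [inv_pow, hsn2] at h3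
          calc ∑ j, ‖v (i, j)‖^2 < ∑ _j : Fin n, (n:ℝ)⁻¹ :=
              Finset.sum_lt_sum_of_nonempty (Finset.univ_nonempty_iff.mpr ⟨⟨0, by omega⟩⟩) hlt
          _ = 1 := by
            rw [Finset.sum_const, Finset.card_univ, Fintype.card_fin, nsmul_eq_mul,
              mul_inv_cancel₀ hn0.ne']
        nlinarith [norm_nonneg (row n i v)]
      exact ⟨Phi n z v, Phi_mem hz hvrows, Phi_Phi hz hvrows⟩
  constructor
  · exact le_csSup ⟨1, hub⟩ hmem
  · exact csSup_le ⟨_, hmem⟩ hub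

/-- For the `n`-fold product `Ω = 𝔹ⁿ × ⋯ × 𝔹ⁿ ⊂ ℂ^(n²)` of Euclidean unit balls and
`n > 1`, neither `S_Ω(z) = (1/n) T_Ω(z)` nor `T_Ω(z) = (1/n) S_Ω(z)` holds. -/
theorem ballSqueezing_ne_and_polydiskSqueezing_ne
    (n : ℕ) (hn : 1 < n)
    (Ω : Set (EuclideanSpace ℂ (Fin n × Fin n)))
    (hΩ : Ω = {z : EuclideanSpace ℂ (Fin n × Fin n) |
      ∀ i : Fin n, ∑ j : Fin n, ‖z (i, j)‖ ^ 2 < 1})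
    (z : EuclideanSpace ℂ (Fin n × Fin n)) (hz : z ∈ Ω) :
    ballSqueezingFunction n Ω z ≠ (1 / n) * polydiskSqueezingFunction n Ω z ∧
    polydiskSqueezingFunction n Ω z ≠ (1 / n) * ballSqueezingFunction n Ω z := by
  have hsetB : {z : EuclideanSpace ℂ (Fin n × Fin n) |
      ∀ i : Fin n, ∑ j : Fin n, ‖z (i, j)‖ ^ 2 < 1} = B n := by
    ext w
    exact forall_congr' fun i => (row_norm_lt_one_iff n w i).symm
  rw [hΩ, hsetB] at hz ⊢
  have hzB : ∀ i, ‖row n i z‖ < 1 := hz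
  obtain ⟨hS1, hS2⟩ := ballBounds n hn z hzB
  obtain ⟨hT1, hT2⟩ := polyBounds n hn z hzB
  have hn0 : (0:ℝ) < n := by positivity
  have hn1 : (1:ℝ) < n := by exact_mod_cast hn
  have hsn : 0 < Real.sqrt n := Real.sqrt_pos.mpr hn0
  have hlt : Real.sqrt n < n := by
    nlinarith [Real.sq_sqrt hn0.le]
  have hkey : 1/(n:ℝ) < (Real.sqrt n)⁻¹ := by
    rw [← one_div]
    exact one_div_lt_one_div_of_lt hsn hlt
  constructor
  · apply ne_of_gt
    calc (1/(n:ℝ)) * polydiskSqueezingFunction n (B n) z ≤ (1/(n:ℝ)) * 1 :=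
        mul_le_mul_of_nonneg_left hT2 (by positivity)
    _ = 1/(n:ℝ) := mul_one _
    _ < (Real.sqrt n)⁻¹ := hkey
    _ ≤ ballSqueezingFunction n (B n) z := hS1
  · apply ne_of_gt
    calc (1/(n:ℝ)) * ballSqueezingFunction n (B n) z ≤ (1/(n:ℝ)) * 1 :=
        mul_le_mul_of_nonneg_left hS2 (by positivity)
    _ = 1/(n:ℝ) := mul_one _
    _ < (Real.sqrt n)⁻¹ := hkey
    _ ≤ polydiskSqueezingFunction n (B n) z := hT1
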